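/- arXiv:1609.03001 — 3 statements merged into one kernel-verified Lean document; each statement's English description precedes it below -/
import Mathlib

section
/- Let n be even, let m be an odd divisor of n, and let L be a latin square of order n indexed by {0,...,n-1}. For an entry (r,c,s) of L define Δ_m(r,c,s) to be the integer of least absolute value congruent to ⌊s/m⌋ − ⌊r/m⌋ − ⌊c/m⌋ modulo n/m. Then for any odd positive integer k and any k-plex K of L, the sum of Δ_m(r,c,s) over all (r,c,s) in K is congruent to n/(2m) modulo n/m. -/
open scoped Classical

/-- A latin square of order `n`: each symbol occurs exactly once in each row and column. -/
def IsLatinSquare {n : ℕ} (L : Fin n → Fin n → Fin n) : Prop :=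
  (∀ i, Function.Bijective fun j => L i j) ∧ (∀ j, Function.Bijective fun i => L i j)

/-- A `k`-plex of `L`: a set of cells with exactly `k` in each row, `k` in each column,
and each symbol occurring exactly `k` times. -/
def IsPlex {n : ℕ} (L : Fin n → Fin n → Fin n) (k : ℕ) (K : Finset (Fin n × Fin n)) : Prop :=
  (∀ i, (K.filter fun p => p.1 = i).card = k) ∧
  (∀ j, (K.filter fun p => p.2 = j).card = k) ∧
  (∀ s, (K.filter fun p => L p.1 p.2 = s).card = k)

/-- `L` has a transversal, i.e. a `1`-plex. -/
def HasTransversal {n : ℕ} (L : Fin n → Fin n → Fin n) : Prop :=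
  ∃ K, IsPlex L 1 K

/-!
Write `g x = ⌊x / m⌋`. Each `Δ_m` is congruent to `g s - g r - g c` modulo `q = n / m`, and in a
`k`-plex every row, column and symbol occurs `k` times, so the sum of `Δ_m` over the plex is
congruent to `-k T`, where `T = ∑_{x < n} g x = m q (q - 1) / 2`. As `m` is odd, `q = 2t` is
even, `T = m t (2t - 1)`, and `-k T` is an odd multiple of `t`, hence `≡ t (mod 2t)`.
-/

theorem Finset.sum_comp_eq_nsmul_sum_univ {ι κ M : Type*} [Fintype κ] [DecidableEq κ]
    [AddCommMonoid M] {s : Finset ι} {h : ι → κ} {k : ℕ}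
    (hfiber : ∀ j, (s.filter fun i => h i = j).card = k) (f : κ → M) :
    ∑ i ∈ s, f (h i) = k • ∑ j, f j := by
  rw [← Finset.sum_fiberwise' s h f, Finset.smul_sum]
  simp only [Finset.sum_const, hfiber]

theorem IsPlex.sum_symbol_sub_row_sub_col {n k : ℕ} {L : Fin n → Fin n → Fin n}
    {K : Finset (Fin n × Fin n)} (hK : IsPlex L k K) (g : Fin n → ℤ) :
    ∑ p ∈ K, (g (L p.1 p.2) - g p.1 - g p.2) = -(k * ∑ x, g x) := by
  obtain ⟨hrow, hcol, hsym⟩ := hK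
  rw [Finset.sum_sub_distrib, Finset.sum_sub_distrib,
    Finset.sum_comp_eq_nsmul_sum_univ hsym g, Finset.sum_comp_eq_nsmul_sum_univ hrow g,
    Finset.sum_comp_eq_nsmul_sum_univ hcol g, nsmul_eq_mul]
  ring

theorem two_mul_sum_range_mul_div {m : ℕ} (hm : 0 < m) (q : ℕ) :
    2 * ∑ i ∈ Finset.range (m * q), ((i / m : ℕ) : ℤ) = m * q * (q - 1) := by
  induction q with
  | zero => simp
  | succ q ih =>
    have hblock : ∀ j ∈ Finset.range m, ((m * q + j) / m : ℕ) = q := fun j hj => by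
      rw [add_comm, Nat.add_mul_div_left j q hm, Nat.div_eq_of_lt (Finset.mem_range.1 hj),
        zero_add]
    rw [Nat.mul_succ, Finset.sum_range_add, mul_add, ih,
      Finset.sum_congr rfl fun j hj => congrArg Nat.cast (hblock j hj)]
    simp only [Finset.sum_const, Finset.card_range, nsmul_eq_mul]
    push_cast
    ring

theorem Int.odd_mul_modEq_self {a : ℤ} (ha : Odd a) (t : ℤ) : a * t ≡ t [ZMOD 2 * t] := by
  obtain ⟨j, rfl⟩ := ha
  exact Int.modEq_iff_dvd.2 ⟨-j, by ring⟩

theorem stmt2_general (n m k : ℕ) (hn : Even n) (hm : Odd m) (hmdvd : m ∣ n)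
    (L : Fin n → Fin n → Fin n) (hk : Odd k)
    (K : Finset (Fin n × Fin n)) (hK : IsPlex L k K) :
    (∑ p ∈ K, Int.bmod ((((L p.1 p.2 : ℕ) / m : ℕ) : ℤ)
        - (((p.1 : ℕ) / m : ℕ) : ℤ) - (((p.2 : ℕ) / m : ℕ) : ℤ)) (n / m))
      ≡ ((n / (2 * m) : ℕ) : ℤ) [ZMOD ((n / m : ℕ) : ℤ)] := by
  obtain ⟨q, rfl⟩ := hmdvd
  obtain ⟨t, rfl⟩ : Even q :=
    (Nat.even_mul.1 hn).resolve_left (Nat.not_even_iff_odd.2 hm)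
  have hquot : m * (t + t) / m = t + t := Nat.mul_div_cancel_left _ hm.pos
  have hhalf : m * (t + t) / (2 * m) = t := by
    rw [show m * (t + t) = 2 * m * t by ring, Nat.mul_div_cancel_left _ (by linarith [hm.pos])]
  have hT : ∑ x : Fin (m * (t + t)), (((x : ℕ) / m : ℕ) : ℤ) = m * t * (2 * t - 1) := by
    have h := two_mul_sum_range_mul_div hm.pos (t + t)
    rw [← Fin.sum_univ_eq_sum_range (fun i => ((i / m : ℕ) : ℤ))] at h
    simp only [Nat.cast_add] at h
    linarith
  rw [hquot, hhalf]
  calc _ ≡ ∑ p ∈ K, ((((L p.1 p.2 : ℕ) / m : ℕ) : ℤ)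
          - (((p.1 : ℕ) / m : ℕ) : ℤ) - (((p.2 : ℕ) / m : ℕ) : ℤ)) [ZMOD ((t + t : ℕ) : ℤ)] :=
        Int.ModEq.sum fun _ _ => Int.bmod_emod
    _ = -(k * m * (2 * t - 1)) * t := by
        rw [hK.sum_symbol_sub_row_sub_col (fun x => (((x : ℕ) / m : ℕ) : ℤ)), hT]
        ring
    _ ≡ t [ZMOD ((t + t : ℕ) : ℤ)] := by
        rw [show ((t + t : ℕ) : ℤ) = 2 * t by push_cast; ring]
        refine Int.odd_mul_modEq_self (Odd.neg (((hk.natCast).mul hm.natCast).mul ?_)) t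
        exact ⟨t - 1, by ring⟩

theorem stmt2 (n m k : ℕ) (hpos : 0 < n) (hn : Even n) (hm : Odd m) (hmdvd : m ∣ n)
    (L : Fin n → Fin n → Fin n) (hL : IsLatinSquare L) (hk : Odd k) (hkpos : 0 < k)
    (K : Finset (Fin n × Fin n)) (hK : IsPlex L k K) :
    (∑ p ∈ K, Int.bmod ((((L p.1 p.2 : ℕ) / m : ℕ) : ℤ)
        - (((p.1 : ℕ) / m : ℕ) : ℤ) - (((p.2 : ℕ) / m : ℕ) : ℤ)) (n / m))
      ≡ ((n / (2 * m) : ℕ) : ℤ) [ZMOD ((n / m : ℕ) : ℤ)] :=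
  stmt2_general n m k hn hm hmdvd L hk K hK
end

section
/- Let n = bm with b even and m odd, let r ≥ 0 and let k be odd with k·m²·r·(r−1) < n. If L is a latin square of order n satisfying ⌊L[i][j]/m⌋ ≡ ⌊i/m⌋ + ⌊j/m⌋ (mod b) for all j and all i with 0 ≤ i < n − mr, then L has no k-plex. -/
open scoped Classical

/-!
Write `β x = ⌊x / m⌋ (mod b)` for the block of a row, column or symbol. Summing
`β (L i j) - β j - β i` over a `k`-plex counts every block `k * m` times among the symbols, the
columns and the rows, so the sum is `-k * m * (0 + 1 + ⋯ + (b - 1)) ≡ b / 2 (mod b)`, because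
`k * m` is odd and `b` is even.

The summand vanishes on the rows that follow the step pattern. In a column, those `m * (b - r)`
rows already use every symbol whose block lies in `β j + {0, …, b - r - 1}`, so a cell in one of
the last `r` row blocks has `β (L i j) - β j ∈ {b - r, …, b - 1}`. Lifting the summands to
integers in this range and adding them up over the `k * m * r` cells of the plex in those rows
bounds the integer sum by `k * m * r * (r - 1) / 2 < b / 2` in absolute value, which no integer
`≡ b / 2 (mod b)` satisfies.
-/

open Finset Function

theorem Finset.sum_comp_eq_nsmul_of_card_fiber {ι κ M : Type*} [Fintype κ] [DecidableEq κ]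
    [AddCommMonoid M] {s : Finset ι} {g : ι → κ} {k : ℕ}
    (h : ∀ y, #{x ∈ s | g x = y} = k) (f : κ → M) : ∑ x ∈ s, f (g x) = k • ∑ y, f y := by
  rw [← sum_fiberwise' s g f, smul_sum]
  simp_rw [sum_const, h]

theorem IsPlex.sum_symbol_sub_col_sub_row {n k : ℕ} {L : Fin n → Fin n → Fin n}
    {K : Finset (Fin n × Fin n)} (hK : IsPlex L k K) {G : Type*} [AddCommGroup G]
    (f : Fin n → G) : ∑ p ∈ K, (f (L p.1 p.2) - f p.2 - f p.1) = -(k • ∑ y, f y) := by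
  rw [sum_sub_distrib, sum_sub_distrib, sum_comp_eq_nsmul_of_card_fiber hK.2.2,
    sum_comp_eq_nsmul_of_card_fiber hK.2.1, sum_comp_eq_nsmul_of_card_fiber hK.1]
  abel

theorem Fin.sum_comp_div {b m : ℕ} {M : Type*} [AddCommMonoid M] (g : ℕ → M) :
    ∑ x : Fin (b * m), g (x / m) = m • ∑ u ∈ range b, g u := by
  rw [← Fin.sum_univ_eq_sum_range, smul_sum, ← finProdFinEquiv.sum_comp, Fintype.sum_prod_type]
  refine Fintype.sum_congr _ _ fun u => ?_
  calc ∑ y : Fin m, g (finProdFinEquiv (u, y) / m) = ∑ _ : Fin m, g u :=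
        Fintype.sum_congr _ _ fun y => by
          rw [finProdFinEquiv_apply_val, Nat.add_mul_div_left _ _ y.pos, Nat.div_eq_of_lt y.isLt,
            zero_add]
    _ = m • g u := by simp

theorem ZMod.sum_univ_eq_sum_range {b : ℕ} [NeZero b] {M : Type*} [AddCommMonoid M]
    (f : ZMod b → M) :
    ∑ w, f w = ∑ u ∈ range b, f u := by
  obtain ⟨b, rfl⟩ : ∃ b', b = b' + 1 := Nat.exists_eq_succ_of_ne_zero (NeZero.ne b)
  rw [← Fin.sum_univ_eq_sum_range]
  exact Fintype.sum_congr _ _ fun w => congrArg f (ZMod.natCast_zmod_val w).symm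

theorem ZMod.sum_univ_eq_half {b c : ℕ} [NeZero b] (hb : b = c + c) : ∑ w : ZMod b, w = c := by
  subst hb
  have hc : 1 ≤ c + c := NeZero.one_le
  have h0 : (c + c : ZMod (c + c)) = 0 := by exact_mod_cast ZMod.natCast_self (c + c)
  have hgauss : ∑ u ∈ range (c + c), u = c * (c + c - 1) :=
    (sum_range_id _).trans (Nat.div_eq_of_eq_mul_left two_pos (by ring))
  rw [ZMod.sum_univ_eq_sum_range fun w => w, ← Nat.cast_sum, hgauss]
  push_cast [Nat.cast_sub hc]
  linear_combination ((c : ZMod (c + c)) - 1) * h0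

theorem ZMod.neg_nsmul_half_of_odd {b c : ℕ} (hb : b = c + c) {q : ℕ} (hq : Odd q) :
    -(q • (c : ZMod b)) = c := by
  obtain ⟨a, rfl⟩ := hq
  have h0 : (c + c : ZMod b) = 0 := by rw [← Nat.cast_add, ← hb, ZMod.natCast_self]
  rw [nsmul_eq_mul]
  push_cast
  linear_combination (-(a : ZMod b) - 1) * h0

theorem le_two_mul_abs_of_intCast_eq_half {b c : ℕ} (hb : b = c + c) {D : ℤ}
    (h : (D : ZMod b) = c) : (b : ℤ) ≤ 2 * |D| := by
  obtain ⟨q, hq⟩ : (b : ℤ) ∣ D - c := by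
    rw [← ZMod.intCast_zmod_eq_zero_iff_dvd]
    push_cast
    rw [h, sub_self]
  have hodd : 2 * D = b * (2 * q + 1) := by
    subst hb
    push_cast at hq ⊢
    linear_combination 2 * hq
  rcases le_or_gt 0 q with hq0 | hq0
  · nlinarith [le_abs_self D]
  · nlinarith [neg_abs_le D]

theorem two_mul_sum_range_ite_le {b r : ℕ} (hr : r ≤ b) (x : ℤ) :
    2 * ∑ u ∈ range b, (if b - r ≤ u then x - u else 0) = r * (2 * x - 2 * b + r + 1) := by
  have htop : ({u ∈ range b | b - r ≤ u} : Finset ℕ) = Ico (b - r) b := by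
    ext u
    simp only [mem_filter, mem_range, mem_Ico]
    omega
  have hgauss := congrArg (Nat.cast : ℕ → ℤ) (sum_range_id_mul_two r)
  push_cast [Nat.mul_sub_one, Nat.cast_sub (Nat.le_mul_self r)] at hgauss
  rw [← sum_filter, htop, sum_Ico_eq_sum_range, Nat.sub_sub_self hr]
  push_cast [Nat.cast_sub hr]
  rw [sum_congr rfl fun (v : ℕ) _ => show x - (b - r + v : ℤ) = (x - b + r) - v by ring,
    sum_sub_distrib, sum_const, card_range, nsmul_eq_mul]
  linear_combination -hgauss

section Blocks

variable {b m : ℕ}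

def block (x : Fin (b * m)) : ZMod b := ((x / m : ℕ) : ZMod b)

theorem val_block (x : Fin (b * m)) : (block x).val = x / m :=
  ZMod.val_cast_of_lt (Nat.div_lt_of_lt_mul (by simp [mul_comm]))

theorem sum_comp_block [NeZero b] {M : Type*} [AddCommMonoid M] (f : ZMod b → M) :
    ∑ x : Fin (b * m), f (block x) = m • ∑ w, f w := by
  rw [ZMod.sum_univ_eq_sum_range]
  exact Fin.sum_comp_div fun u => f u

theorem card_filter_block [NeZero b] (P : ZMod b → Prop) [DecidablePred P] :
    #{x : Fin (b * m) | P (block x)} = m * #{w | P w} := by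
  simp only [card_filter]
  exact sum_comp_block fun w => if P w then 1 else 0

theorem le_val_block_sub_of_injective [NeZero b] {f : Fin (b * m) → Fin (b * m)}
    (hf : Injective f) (a : ZMod b) {s : ℕ}
    (hgood : ∀ i : Fin (b * m), i / m < s → block (f i) = block i + a)
    {i : Fin (b * m)} (hi : s ≤ i / m) : s ≤ (block (f i) - a).val := by
  by_contra! hfi
  set good : Finset (Fin (b * m)) := {x | (block x).val < s}
  set target : Finset (Fin (b * m)) := {x | (block x - a).val < s}
  have hcard : #target ≤ #good := le_of_eq <| by
    rw [card_filter_block (m := m) (fun w : ZMod b => (w - a).val < s),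
      card_filter_block (m := m) (fun w : ZMod b => w.val < s)]
    exact congrArg (m * ·) (card_equiv (Equiv.subRight a) (by simp))
  have hmaps : Set.MapsTo f good target := by
    intro x hx
    simp only [good, target, coe_filter, mem_univ, true_and, Set.mem_ofPred_eq] at hx ⊢
    rwa [hgood x (val_block x ▸ hx), add_sub_cancel_right]
  obtain ⟨g, hg, hgi⟩ :=
    surjOn_of_injOn_of_card_le f hmaps hf.injOn hcard (by simpa [target] using hfi)
  rw [hf hgi] at hg
  simp only [val_block, coe_filter, mem_univ, true_and, Set.mem_ofPred_eq, good] at hg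
  omega

def blockDefect (L : Fin (b * m) → Fin (b * m) → Fin (b * m)) (i j : Fin (b * m)) : ℤ :=
  ((block (L i j) - block j).val : ℤ) - ((i / m : ℕ) : ℤ)

theorem intCast_blockDefect [NeZero b] (L : Fin (b * m) → Fin (b * m) → Fin (b * m))
    (i j : Fin (b * m)) : (blockDefect L i j : ZMod b) = block (L i j) - block j - block i := by
  simp only [blockDefect, block, Int.cast_sub, Int.cast_natCast, ZMod.natCast_zmod_val]

theorem ite_le_blockDefect_le [NeZero b] {L : Fin (b * m) → Fin (b * m) → Fin (b * m)}
    {s : ℕ} {j : Fin (b * m)} (hcol : Injective fun i => L i j)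
    (hgood : ∀ i : Fin (b * m), i / m < s → block (L i j) = block i + block j)
    (i : Fin (b * m)) :
    (if s ≤ i / m then (s : ℤ) - (i / m : ℕ) else 0) ≤ blockDefect L i j ∧
      blockDefect L i j ≤ if s ≤ i / m then (b : ℤ) - 1 - (i / m : ℕ) else 0 := by
  split_ifs with hi
  · have hlow := le_val_block_sub_of_injective hcol (block j) hgood hi
    have hup := ZMod.val_lt (block (L i j) - block j)
    unfold blockDefect
    omega
  · simp [blockDefect, hgood i (not_le.mp hi), val_block]

end Blocks

section Plex

variable {b m k : ℕ} {L : Fin (b * m) → Fin (b * m) → Fin (b * m)}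
  {K : Finset (Fin (b * m) × Fin (b * m))}

theorem IsPlex.sum_comp_row_div {M : Type*} [AddCommMonoid M] (hK : IsPlex L k K) (g : ℕ → M) :
    ∑ p ∈ K, g (p.1 / m) = k • m • ∑ u ∈ range b, g u := by
  rw [sum_comp_eq_nsmul_of_card_fiber hK.1 fun i => g (i / m), Fin.sum_comp_div]

theorem IsPlex.intCast_sum_blockDefect [NeZero b] (hK : IsPlex L k K) {c : ℕ} (hb : b = c + c)
    (hkm : Odd (k * m)) : ((∑ p ∈ K, blockDefect L p.1 p.2 : ℤ) : ZMod b) = c := by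
  push_cast [intCast_blockDefect]
  rw [hK.sum_symbol_sub_col_sub_row, sum_comp_block (m := m) fun w : ZMod b => w,
    ZMod.sum_univ_eq_half hb, smul_smul]
  exact ZMod.neg_nsmul_half_of_odd hb hkm

theorem IsPlex.two_mul_abs_sum_blockDefect_le [NeZero b] (hK : IsPlex L k K) {r : ℕ}
    (hr : r ≤ b) (hcol : ∀ j, Injective fun i => L i j)
    (hgood : ∀ i j : Fin (b * m), i / m < b - r → block (L i j) = block i + block j) :
    2 * |∑ p ∈ K, blockDefect L p.1 p.2| ≤ ((k * m * (r * (r - 1)) : ℕ) : ℤ) := by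
  have hcell (p : Fin (b * m) × Fin (b * m)) :=
    ite_le_blockDefect_le (hcol p.2) (hgood · p.2 ·) p.1
  have hlow :
      2 * ∑ p ∈ K, (if b - r ≤ p.1 / m then ((b - r : ℕ) : ℤ) - (p.1 / m : ℕ) else 0)
        ≤ 2 * ∑ p ∈ K, blockDefect L p.1 p.2 := by
    gcongr with p
    exact (hcell p).1
  have hup : 2 * ∑ p ∈ K, blockDefect L p.1 p.2
      ≤ 2 * ∑ p ∈ K, (if b - r ≤ p.1 / m then (b : ℤ) - 1 - (p.1 / m : ℕ) else 0) := by
    gcongr with p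
    exact (hcell p).2
  rw [hK.sum_comp_row_div fun u => if b - r ≤ u then ((b - r : ℕ) : ℤ) - u else 0, smul_smul,
    nsmul_eq_mul, mul_left_comm, two_mul_sum_range_ite_le hr] at hlow
  rw [hK.sum_comp_row_div fun u => if b - r ≤ u then (b : ℤ) - 1 - u else 0, smul_smul,
    nsmul_eq_mul, mul_left_comm, two_mul_sum_range_ite_le hr] at hup
  push_cast [Nat.cast_sub hr, Nat.mul_sub_one, Nat.cast_sub (Nat.le_mul_self r)] at hlow hup ⊢
  rw [← abs_two, ← abs_mul, abs_le]
  constructor <;> linarith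

end Plex

theorem stmt5_general (b m n k r : ℕ) (hb : Even b) (hm : Odd m)
    (hn : n = b * m) (hk : Odd k) (hkr : k * m ^ 2 * r * (r - 1) < n)
    (L : Fin n → Fin n → Fin n) (hL : IsLatinSquare L)
    (hstep : ∀ i j : Fin n, (i : ℕ) < n - m * r →
      (L i j : ℕ) / m ≡ (i : ℕ) / m + (j : ℕ) / m [MOD b]) :
    ¬ ∃ K, IsPlex L k K := by
  rintro ⟨K, hK⟩
  subst hn
  obtain ⟨c, hc⟩ := hb
  have hkmr : k * m * (r * (r - 1)) < b :=
    Nat.lt_of_mul_lt_mul_right (a := m) (by convert hkr using 1; ring)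
  have : NeZero b := ⟨by omega⟩
  have hrb : r ≤ b := by
    by_contra! hbr
    have h1 : r ≤ r * (r - 1) := Nat.le_mul_of_pos_right r (by omega)
    have h2 := Nat.le_mul_of_pos_left (r * (r - 1)) (Nat.mul_pos hk.pos hm.pos)
    omega
  have hgood (i j : Fin (b * m)) (hi : i / m < b - r) : block (L i j) = block i + block j := by
    have hrow : (i : ℕ) < b * m - m * r := by
      rw [mul_comm m, ← Nat.sub_mul]
      exact (Nat.div_lt_iff_lt_mul hm.pos).mp hi
    simpa [block] using (ZMod.natCast_eq_natCast_iff _ _ _).mpr (hstep i j hrow)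
  have hhalf := le_two_mul_abs_of_intCast_eq_half hc (hK.intCast_sum_blockDefect hc (hk.mul hm))
  have hbound := hK.two_mul_abs_sum_blockDefect_le hrb (fun j => (hL.2 j).injective) hgood
  have : ((k * m * (r * (r - 1)) : ℕ) : ℤ) < b := by exact_mod_cast hkmr
  linarith

theorem stmt5 (b m n k r : ℕ) (hb : Even b) (hbpos : 0 < b) (hm : Odd m)
    (hn : n = b * m) (hk : Odd k) (hkr : k * m ^ 2 * r * (r - 1) < n)
    (L : Fin n → Fin n → Fin n) (hL : IsLatinSquare L)
    (hstep : ∀ i j : Fin n, (i : ℕ) < n - m * r →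
      (L i j : ℕ) / m ≡ (i : ℕ) / m + (j : ℕ) / m [MOD b]) :
    ¬ ∃ K, IsPlex L k K :=
  stmt5_general b m n k r hb hm hn hk hkr L hL hstep
end

section
/- Let n be even and L a latin square of order n that differs from B_n only in rows 0 and n/4 (where 4 | n), such that every entry (r,c,s) of L satisfies: Δ_1(r,c,s) = 0 if r ∉ {0, n/4}, Δ_1(r,c,s) ∈ {0, n/4} if r = 0, and Δ_1(r,c,s) ∈ {0, −n/4} if r = n/4, where Δ_1(r,c,s) is the least-absolute-value residue of s−r−c modulo n. Then L has no transversal. -/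
/-!
Along a transversal the rows, the columns and the symbols each run through `0, …, n - 1` once,
so the sum of `s - r - c` over it is `-n(n-1)/2`, which for even `n` is `≡ n/2 (mod n)`; hence so is
the sum of the least-absolute-value residues `Δ₁`. Under the hypotheses only rows `0` and `n/4`
contribute to that sum, with values in `{0, n/4}` and `{0, -n/4}`, so the sum lies in
`[-n/4, n/4]`, and no such integer is `≡ n/2 (mod n)`.
-/

open scoped Classical

open Finset

def delta₁ {n : ℕ} (L : Fin n → Fin n → Fin n) (p : Fin n × Fin n) : ℤ :=
  Int.bmod (((L p.1 p.2 : ℕ) : ℤ) - ((p.1 : ℕ) : ℤ) - ((p.2 : ℕ) : ℤ)) n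

theorem sum_comp_eq_sum_univ_of_card_filter_eq_one {α β M : Type*} [Fintype β] [DecidableEq β]
    [AddCommMonoid M] {K : Finset α} {g : α → β} (hg : ∀ b, (K.filter fun p => g p = b).card = 1)
    (f : β → M) : ∑ p ∈ K, f (g p) = ∑ b, f b := by
  rw [← sum_fiberwise K g (fun p => f (g p))]
  refine sum_congr rfl fun b _ => ?_
  rw [sum_congr rfl fun p hp => by rw [(mem_filter.mp hp).2], sum_const, hg b, one_smul]

theorem sum_mem_Icc_of_card_filter_fst_eq_one {α β : Type*} [Fintype α] [DecidableEq α]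
    {K : Finset (α × β)} (hK : ∀ i, (K.filter fun p => p.1 = i).card = 1) {f : α × β → ℤ}
    {a b : α → ℤ} (hf : ∀ i j, (i, j) ∈ K → f (i, j) ∈ Set.Icc (a i) (b i)) :
    ∑ i, a i ≤ ∑ p ∈ K, f p ∧ ∑ p ∈ K, f p ≤ ∑ i, b i := by
  rw [← sum_comp_eq_sum_univ_of_card_filter_eq_one hK a,
    ← sum_comp_eq_sum_univ_of_card_filter_eq_one hK b]
  exact ⟨sum_le_sum fun p hp => (hf p.1 p.2 hp).1, sum_le_sum fun p hp => (hf p.1 p.2 hp).2⟩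

theorem Fin.sum_ite_val_eq {M : Type*} [AddCommMonoid M] {n k : ℕ} (hk : k < n) (c : M) :
    ∑ i : Fin n, (if (i : ℕ) = k then c else 0) = c := by
  simp [Fin.sum_univ_eq_sum_range (fun i => if i = k then c else 0), hk]

theorem neg_sum_fin_val_modEq_half {n : ℕ} (hn : Even n) :
    -∑ i : Fin n, ((i : ℕ) : ℤ) ≡ ((n / 2 : ℕ) : ℤ) [ZMOD n] := by
  obtain ⟨m, rfl⟩ := hn
  have hsum : (∑ i : Fin (m + m), ((i : ℕ) : ℤ)) * 2 = (m + m) * (m + m - 1) := by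
    rw [Fin.sum_univ_eq_sum_range (fun i => (i : ℤ))]
    rcases Nat.eq_zero_or_pos m with rfl | hm
    · simp
    · have := sum_range_id_mul_two (m + m)
      zify [show 1 ≤ m + m by omega] at this
      exact_mod_cast this
  rw [Int.modEq_iff_dvd, show (m + m) / 2 = m by omega]
  exact ⟨m, by push_cast; linarith⟩

theorem IsPlex.sum_delta₁_modEq {n : ℕ} (hn : Even n) {L : Fin n → Fin n → Fin n}
    {K : Finset (Fin n × Fin n)} (hK : IsPlex L 1 K) :
    ∑ p ∈ K, delta₁ L p ≡ ((n / 2 : ℕ) : ℤ) [ZMOD n] := by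
  obtain ⟨hrow, hcol, hsym⟩ := hK
  have hval {g : Fin n × Fin n → Fin n} (hg : ∀ i, (K.filter fun p => g p = i).card = 1) :
      ∑ p ∈ K, ((g p : ℕ) : ℤ) = ∑ i : Fin n, ((i : ℕ) : ℤ) :=
    sum_comp_eq_sum_univ_of_card_filter_eq_one hg fun i => ((i : ℕ) : ℤ)
  calc ∑ p ∈ K, delta₁ L p
      ≡ ∑ p ∈ K, (((L p.1 p.2 : ℕ) : ℤ) - ((p.1 : ℕ) : ℤ) - ((p.2 : ℕ) : ℤ)) [ZMOD n] :=
        Int.ModEq.sum fun _ _ => Int.bmod_emod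
    _ = -∑ i : Fin n, ((i : ℕ) : ℤ) := by
        rw [sum_sub_distrib, sum_sub_distrib, hval hsym, hval hrow, hval hcol]
        ring
    _ ≡ ((n / 2 : ℕ) : ℤ) [ZMOD n] := neg_sum_fin_val_modEq_half hn

theorem delta₁_eq_zero_of_eq_add {n : ℕ} {L : Fin n → Fin n → Fin n} {i j : Fin n}
    (h : L i j = i + j) : delta₁ L (i, j) = 0 := by
  refine Int.dvd_iff_bmod_eq_zero.mp ?_
  rw [h, Fin.val_add, ← Int.dvd_neg, Int.natCast_mod]
  push_cast
  rw [show -((i + j : ℤ) % n - i - j) = i + j - (i + j) % n by ring]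
  exact (Int.mod_modEq _ _).dvd

theorem not_modEq_two_mul_of_abs_le {m x : ℤ} (hm : 0 < m) (hx : |x| ≤ m) :
    ¬ x ≡ 2 * m [ZMOD 4 * m] := by
  obtain ⟨hlo, hhi⟩ := abs_le.mp hx
  intro h
  have := Int.eq_zero_of_abs_lt_dvd (Int.modEq_iff_dvd.mp h)
    (abs_lt.mpr ⟨by linarith, by linarith⟩)
  linarith

theorem delta₁_mem_Icc_of_rows {n k : ℕ} {L : Fin n → Fin n → Fin n} {m : ℤ} (hm : 0 ≤ m)
    (hrows : ∀ i j : Fin n, (i : ℕ) ≠ 0 → (i : ℕ) ≠ k → L i j = i + j)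
    (h0 : ∀ i j : Fin n, (i : ℕ) = 0 → delta₁ L (i, j) ∈ ({0, m} : Set ℤ))
    (hk : ∀ i j : Fin n, (i : ℕ) = k → delta₁ L (i, j) ∈ ({0, -m} : Set ℤ))
    (i j : Fin n) :
    delta₁ L (i, j) ∈ Set.Icc (if (i : ℕ) = k then -m else 0) (if (i : ℕ) = 0 then m else 0) := by
  by_cases hi0 : (i : ℕ) = 0
  · have h : delta₁ L (i, j) = 0 ∨ delta₁ L (i, j) = m := h0 i j hi0
    constructor <;> split_ifs <;> omega
  by_cases hik : (i : ℕ) = k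
  · have h : delta₁ L (i, j) = 0 ∨ delta₁ L (i, j) = -m := hk i j hik
    constructor <;> split_ifs <;> omega
  · have h := delta₁_eq_zero_of_eq_add (hrows i j hi0 hik)
    constructor <;> split_ifs <;> omega

theorem stmt19_general (n : ℕ) (hpos : 0 < n) (hn : Even n) (h4 : 4 ∣ n)
    (L : Fin n → Fin n → Fin n)
    (hrows : ∀ i j : Fin n, (i : ℕ) ≠ 0 → (i : ℕ) ≠ n / 4 → L i j = i + j)
    (h0 : ∀ i j : Fin n, (i : ℕ) = 0 →
      Int.bmod (((L i j : ℕ) : ℤ) - ((i : ℕ) : ℤ) - ((j : ℕ) : ℤ)) n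
        ∈ ({0, ((n / 4 : ℕ) : ℤ)} : Set ℤ))
    (hq : ∀ i j : Fin n, (i : ℕ) = n / 4 →
      Int.bmod (((L i j : ℕ) : ℤ) - ((i : ℕ) : ℤ) - ((j : ℕ) : ℤ)) n
        ∈ ({0, -((n / 4 : ℕ) : ℤ)} : Set ℤ)) :
    ¬ HasTransversal L := by
  rintro ⟨K, hK⟩
  have hk : 0 < n / 4 := Nat.div_pos (Nat.le_of_dvd hpos h4) (by norm_num)
  obtain ⟨hlow, hup⟩ := sum_mem_Icc_of_card_filter_fst_eq_one hK.1
    fun i j _ => delta₁_mem_Icc_of_rows (by positivity) hrows h0 hq i j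
  rw [Fin.sum_ite_val_eq (Nat.div_lt_self hpos (by norm_num))] at hlow
  rw [Fin.sum_ite_val_eq hpos] at hup
  refine not_modEq_two_mul_of_abs_le (m := ((n / 4 : ℕ) : ℤ)) (by exact_mod_cast hk)
    (abs_le.mpr ⟨hlow, hup⟩) ?_
  convert hK.sum_delta₁_modEq hn using 2 <;> push_cast <;> omega

theorem stmt19 (n : ℕ) (hpos : 0 < n) (hn : Even n) (h4 : 4 ∣ n)
    (L : Fin n → Fin n → Fin n) (hL : IsLatinSquare L)
    (hrows : ∀ i j : Fin n, (i : ℕ) ≠ 0 → (i : ℕ) ≠ n / 4 → L i j = i + j)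
    (h0 : ∀ i j : Fin n, (i : ℕ) = 0 →
      Int.bmod (((L i j : ℕ) : ℤ) - ((i : ℕ) : ℤ) - ((j : ℕ) : ℤ)) n
        ∈ ({0, ((n / 4 : ℕ) : ℤ)} : Set ℤ))
    (hq : ∀ i j : Fin n, (i : ℕ) = n / 4 →
      Int.bmod (((L i j : ℕ) : ℤ) - ((i : ℕ) : ℤ) - ((j : ℕ) : ℤ)) n
        ∈ ({0, -((n / 4 : ℕ) : ℤ)} : Set ℤ)) :
    ¬ HasTransversal L :=
  stmt19_general n hpos hn h4 L hrows h0 hq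
end
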